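/- Let n be even, k ≥ 2 an integer, σ ∈ {±1}^n a balanced vector, and e a k-subset of [n] with r = #{v ∈ e : σ_v = −1} (so that 1_eᵀσ_e = k − 2r). Then σᵀ Y_e σ = 4 k r (k−r) − (16/n) r² (k−r)². In particular σᵀ Y_e σ = 0 whenever σ is constant on e. -/

import Mathlib

open Finset Filter Matrix

open scoped Classical

/-- The `k`-element subsets of `[n]`, i.e. the potential hyperedges. -/
abbrev KSet (n k : ℕ) := {e : Finset (Fin n) // e.card = k}

/-- A `±1` label vector (encoded by `Bool`) is balanced if it has equally many
`+1`'s (`true`) and `-1`'s (`false`). -/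
abbrev balanced {n : ℕ} (σ : Fin n → Bool) : Prop :=
  2 * (Finset.univ.filter (fun i => σ i = true)).card = n

/-- `e` is in-cluster w.r.t. `σ`: `σ` is constant on `e`. -/
abbrev inCluster {n : ℕ} (σ : Fin n → Bool) (e : Finset (Fin n)) : Prop :=
  ∀ i ∈ e, ∀ j ∈ e, σ i = σ j

/-- Probability that `e` appears as an edge, given the labels `σ`. -/
noncomputable def edgeP {n : ℕ} (p q : ℝ) (σ : Fin n → Bool) (e : Finset (Fin n)) : ℝ :=
  if inCluster σ e then p else q

/-- Probability of observing exactly the hypergraph with edge-indicator `E`, given labels `σ`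
(edges appear independently). -/
noncomputable def hypProb {n k : ℕ} (p q : ℝ) (σ : Fin n → Bool) (E : KSet n k → Bool) : ℝ :=
  ∏ e : KSet n k, if E e then edgeP p q σ e.1 else 1 - edgeP p q σ e.1

/-- Uniform prior on balanced label vectors. -/
noncomputable def sigProb (n : ℕ) (σ : Fin n → Bool) : ℝ :=
  if balanced σ then 1 / ((Finset.univ.filter (fun τ : Fin n → Bool => balanced τ)).card : ℝ)
  else 0

/-- Probability of an event `P` under the joint law `HSBM(n,p,q;k)` of `(σ, ℋ)`. -/
noncomputable def prEvent (n k : ℕ) (p q : ℝ)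
    (P : (Fin n → Bool) → (KSet n k → Bool) → Prop) : ℝ :=
  ∑ σ : Fin n → Bool, ∑ E : KSet n k → Bool,
    sigProb n σ * hypProb p q σ E * (if P σ E then 1 else 0)

/-- Global sign flip. -/
def negB {n : ℕ} (σ : Fin n → Bool) : Fin n → Bool := fun i => !(σ i)

/-- The edge probability parameter `α · log n / C(n-1, k-1)`. -/
noncomputable def pParam (k : ℕ) (α : ℝ) (n : ℕ) : ℝ :=
  α * Real.log n / ((n - 1).choose (k - 1) : ℝ)

/-- The real `±1` vector associated to a Boolean label vector. -/
def sgn {n : ℕ} (σ : Fin n → Bool) : Fin n → ℝ := fun i => if σ i then 1 else -1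

/-- The rank-one matrix `σσᵀ`. -/
noncomputable def outer {n : ℕ} (σ : Fin n → Bool) : Matrix (Fin n) (Fin n) ℝ :=
  Matrix.of fun i j => sgn σ i * sgn σ j

/-- The weighted adjacency matrix `W(H)`: `W i j` is the number of hyperedges containing
both `i` and `j` (zero on the diagonal). -/
noncomputable def Wmat {n k : ℕ} (E : KSet n k → Bool) : Matrix (Fin n) (Fin n) ℝ :=
  Matrix.of fun i j => if i = j then 0 else
    ((Finset.univ.filter (fun e : KSet n k => E e = true ∧ i ∈ e.1 ∧ j ∈ e.1)).card : ℝ)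

/-- Feasibility for the SDP relaxation: `X ⪰ 0`, unit diagonal, `⟨X, 𝟙𝟙ᵀ⟩ = 0`. -/
def sdpFeasible {n : ℕ} (X : Matrix (Fin n) (Fin n) ℝ) : Prop :=
  X.PosSemidef ∧ (∀ i, X i i = 1) ∧ (∑ i, ∑ j, X i j) = 0

/-- The SDP objective `⟨W, X⟩`. -/
noncomputable def sdpObj {n : ℕ} (W X : Matrix (Fin n) (Fin n) ℝ) : ℝ :=
  ∑ i, ∑ j, W i j * X i j

/-- `Xs` is the unique optimal solution of the SDP with input `W`. -/
def sdpUniqueOpt {n : ℕ} (W Xs : Matrix (Fin n) (Fin n) ℝ) : Prop :=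
  sdpFeasible Xs ∧ ∀ X, sdpFeasible X → X ≠ Xs → sdpObj W X < sdpObj W Xs

/-- `Γ = diag(σ) W diag(σ)`. -/
noncomputable def GammaM {n : ℕ} (σ : Fin n → Bool) (W : Matrix (Fin n) (Fin n) ℝ) :
    Matrix (Fin n) (Fin n) ℝ :=
  Matrix.diagonal (sgn σ) * W * Matrix.diagonal (sgn σ)

/-- The Laplacian `L_Γ = diag(Γ𝟙) - Γ`. -/
noncomputable def LGamma {n : ℕ} (σ : Fin n → Bool) (W : Matrix (Fin n) (Fin n) ℝ) :
    Matrix (Fin n) (Fin n) ℝ :=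
  Matrix.diagonal (fun i => ∑ j, GammaM σ W i j) - GammaM σ W

/-- `Π = I - (1/n)𝟙𝟙ᵀ - (1/n)σσᵀ`, the projector onto `span{𝟙, σ}ᗮ`. -/
noncomputable def PiM {n : ℕ} (σ : Fin n → Bool) : Matrix (Fin n) (Fin n) ℝ :=
  1 - (n : ℝ)⁻¹ • Matrix.of (fun _ _ => (1 : ℝ)) - (n : ℝ)⁻¹ • outer σ

/-- The third-smallest eigenvalue of a symmetric matrix, via the Courant–Fischer
max–min characterization over subspaces of dimension `n - 2`. -/
noncomputable def lambda3 {n : ℕ} (M : Matrix (Fin n) (Fin n) ℝ) : ℝ :=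
  sSup {r : ℝ | ∃ V : Submodule ℝ (Fin n → ℝ), Module.finrank ℝ V = n - 2 ∧
    ∀ x ∈ V, r * (∑ i, x i ^ 2) ≤ x ⬝ᵥ M.mulVec x}

/-- `σ_e = diag(σ) 1_e`: the signed indicator vector of the edge `e`. -/
noncomputable def sigE {n : ℕ} (σ : Fin n → Bool) (e : Finset (Fin n)) : Fin n → ℝ :=
  fun i => if i ∈ e then sgn σ i else 0

/-- The matrix `(1_eᵀ σ_e) · diag(σ_e) - σ_e σ_eᵀ`. -/
noncomputable def Amat {n : ℕ} (σ : Fin n → Bool) (e : Finset (Fin n)) :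
    Matrix (Fin n) (Fin n) ℝ :=
  (∑ i ∈ e, sgn σ i) • Matrix.diagonal (sigE σ e) -
    Matrix.of fun i j => sigE σ e i * sigE σ e j

/-! Write `k = #e` and `c = 1_eᵀσ_e = k - 2r`. Since `A = (1_eᵀσ_e)·diag(σ_e) - σ_eσ_eᵀ` is
symmetric, `σᵀY_eσ = vᵀΠv` with `v = Aσ = c·1_e - k·σ_e`. This vector satisfies `𝟙ᵀv = 0`,
`σᵀv = c² - k²` and `vᵀv = k(k² - c²)`, so `σᵀY_eσ = k(k² - c²) - (k² - c²)²/n`, and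
`k² - c² = 4r(k - r)`. If `σ` is constant on `e` then `r = 0` or `r = k`. -/

theorem dotProduct_mulVec_mul_mul_of_isSymm {ι R : Type*} [Fintype ι] [CommSemiring R]
    {A : Matrix ι ι R} (hA : A.IsSymm) (M : Matrix ι ι R) (x : ι → R) :
    x ⬝ᵥ (A * M * A) *ᵥ x = (A *ᵥ x) ⬝ᵥ M *ᵥ (A *ᵥ x) := by
  rw [← mulVec_mulVec, ← mulVec_mulVec, dotProduct_mulVec, ← mulVec_transpose, hA.eq]

section

variable {n : ℕ} (σ : Fin n → Bool)

theorem sgn_mul_self (i : Fin n) : sgn σ i * sgn σ i = 1 := by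
  unfold sgn; split <;> norm_num

theorem dotProduct_PiM_mulVec (v : Fin n → ℝ) :
    v ⬝ᵥ PiM σ *ᵥ v =
      v ⬝ᵥ v - (n : ℝ)⁻¹ * (∑ i, v i) ^ 2 - (n : ℝ)⁻¹ * (sgn σ ⬝ᵥ v) ^ 2 := by
  have hones :
      (Matrix.of fun _ _ => (1 : ℝ) : Matrix (Fin n) (Fin n) ℝ) *ᵥ v = (∑ i, v i) • 1 := by
    ext; simp [mulVec, dotProduct]
  have houter : outer σ *ᵥ v = (sgn σ ⬝ᵥ v) • sgn σ := by
    ext i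
    simp only [outer, mulVec, dotProduct, of_apply, Pi.smul_apply, smul_eq_mul, Finset.sum_mul]
    exact sum_congr rfl fun j _ => by ring
  simp only [PiM, sub_mulVec, smul_mulVec, one_mulVec, hones, houter, dotProduct_sub,
    dotProduct_smul, smul_eq_mul, dotProduct_one, dotProduct_comm v (sgn σ)]
  ring

variable (e : Finset (Fin n))

theorem isSymm_Amat : (Amat σ e).IsSymm := by
  ext i j
  by_cases h : i = j
  · subst h; rfl
  · simp [Amat, diagonal_apply_ne _ h, diagonal_apply_ne _ (Ne.symm h), mul_comm]

theorem Amat_mulVec_sgn :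
    Amat σ e *ᵥ sgn σ = fun i => if i ∈ e then (∑ j ∈ e, sgn σ j) - #e * sgn σ i else 0 := by
  have hsum : ∑ j, sigE σ e j * sgn σ j = #e := by
    simp [sigE, ite_mul, Finset.sum_ite_mem, sgn_mul_self]
  ext i
  simp only [Amat, sub_mulVec, smul_mulVec, mulVec_diagonal, Pi.sub_apply, Pi.smul_apply,
    smul_eq_mul]
  simp only [mulVec, dotProduct, of_apply, mul_assoc, ← Finset.mul_sum, hsum]
  by_cases hi : i ∈ e <;> simp [sigE, hi, sgn_mul_self]
  ring

theorem sum_sgn_eq_card_sub_two_mul :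
    ∑ i ∈ e, sgn σ i = #e - 2 * #(e.filter fun v => σ v = false) := by
  have hcard := card_filter_add_card_filter_not (s := e) (fun v => σ v = false)
  simp only [Bool.not_eq_false] at hcard
  simp only [sgn, sum_ite, sum_const, nsmul_eq_mul, mul_one, mul_neg, Bool.not_eq_true]
  rw [← hcard]
  push_cast
  ring

theorem card_filter_eq_zero_or_card_of_inCluster (hcl : inCluster σ e) :
    #(e.filter fun v => σ v = false) = 0 ∨ #(e.filter fun v => σ v = false) = #e := by
  by_cases h : ∃ i ∈ e, σ i = false
  · obtain ⟨i₀, hi₀, hfalse⟩ := h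
    exact Or.inr <| congrArg card <|
      filter_true_of_mem fun i hi => (hcl i hi i₀ hi₀).trans hfalse
  · push Not at h
    exact Or.inl (card_eq_zero.mpr (filter_eq_empty_iff.mpr fun i hi => by simp [h i hi]))

theorem sgn_dotProduct_Amat_mul_PiM_mul_Amat_mulVec_sgn :
    sgn σ ⬝ᵥ (Amat σ e * PiM σ * Amat σ e) *ᵥ sgn σ =
      #e * (#e ^ 2 - (∑ i ∈ e, sgn σ i) ^ 2) -
        (n : ℝ)⁻¹ * (#e ^ 2 - (∑ i ∈ e, sgn σ i) ^ 2) ^ 2 := by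
  rw [dotProduct_mulVec_mul_mul_of_isSymm (isSymm_Amat σ e), dotProduct_PiM_mulVec,
    Amat_mulVec_sgn]
  set c := ∑ i ∈ e, sgn σ i
  set k : ℝ := (#e : ℝ)
  have hsum : ∑ i ∈ e, (c - k * sgn σ i) = 0 := by
    rw [sum_sub_distrib, ← mul_sum, sum_const, nsmul_eq_mul]; ring
  have hsgn : ∑ i ∈ e, sgn σ i * (c - k * sgn σ i) = c ^ 2 - k ^ 2 := by
    simp only [mul_sub, mul_left_comm _ k, sgn_mul_self, sum_sub_distrib, ← sum_mul, sum_const,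
      nsmul_eq_mul]
    ring
  have hsq : ∑ i ∈ e, (c - k * sgn σ i) * (c - k * sgn σ i) = k * (k ^ 2 - c ^ 2) := by
    have hterm : ∀ i,
        (c - k * sgn σ i) * (c - k * sgn σ i) = c ^ 2 + k ^ 2 - 2 * c * k * sgn σ i := by
      intro i; linear_combination k ^ 2 * sgn_mul_self σ i
    simp only [hterm, sum_sub_distrib, ← mul_sum, sum_const, nsmul_eq_mul]
    ring
  simp only [dotProduct, mul_ite, ite_mul, mul_zero, zero_mul, sum_ite_mem, univ_inter,
    inter_self, hsum, hsgn, hsq]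
  ring

end

theorem sigma_Ye_sigma_general (n k : ℕ)
    (σ : Fin n → Bool) (e : Finset (Fin n)) (he : e.card = k) :
    sgn σ ⬝ᵥ ((Amat σ e * PiM σ * Amat σ e).mulVec (sgn σ))
        = 4 * (k : ℝ) * ((e.filter (fun v => σ v = false)).card : ℝ) *
            ((k : ℝ) - ((e.filter (fun v => σ v = false)).card : ℝ))
          - (16 / (n : ℝ)) * ((e.filter (fun v => σ v = false)).card : ℝ) ^ 2 *
            ((k : ℝ) - ((e.filter (fun v => σ v = false)).card : ℝ)) ^ 2 ∧
    (inCluster σ e → sgn σ ⬝ᵥ ((Amat σ e * PiM σ * Amat σ e).mulVec (sgn σ)) = 0) := by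
  subst he
  rw [sgn_dotProduct_Amat_mul_PiM_mul_Amat_mulVec_sgn, sum_sgn_eq_card_sub_two_mul]
  refine ⟨by ring, fun hcl => ?_⟩
  rcases card_filter_eq_zero_or_card_of_inCluster σ e hcl with hr | hr <;> rw [hr] <;> ring

/-- For balanced `σ` and a `k`-subset `e` with
`r = #{v ∈ e : σ_v = -1}`, one has `σᵀ Y_e σ = 4kr(k-r) - (16/n) r²(k-r)²`;
in particular `σᵀ Y_e σ = 0` whenever `σ` is constant on `e`. -/
theorem sigma_Ye_sigma (n k : ℕ) (hn : Even n) (hn0 : 0 < n) (hk : 2 ≤ k)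
    (σ : Fin n → Bool) (hσ : balanced σ) (e : Finset (Fin n)) (he : e.card = k) :
    sgn σ ⬝ᵥ ((Amat σ e * PiM σ * Amat σ e).mulVec (sgn σ))
        = 4 * (k : ℝ) * ((e.filter (fun v => σ v = false)).card : ℝ) *
            ((k : ℝ) - ((e.filter (fun v => σ v = false)).card : ℝ))
          - (16 / (n : ℝ)) * ((e.filter (fun v => σ v = false)).card : ℝ) ^ 2 *
            ((k : ℝ) - ((e.filter (fun v => σ v = false)).card : ℝ)) ^ 2 ∧
    (inCluster σ e → sgn σ ⬝ᵥ ((Amat σ e * PiM σ * Amat σ e).mulVec (sgn σ)) = 0) :=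
  sigma_Ye_sigma_general n k σ e he
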